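/- Suppose A_c := A − BK is Schur-stable. Fix integers j ≥ k ≥ 0. Then the (j,k) block of the condensed Hessian with terminal weight P = Q converges, as the horizon N → ∞, to the Toeplitz block T_{j−k}; that is, lim_{N→∞} [ ∑_{i=0}^{N−1−j} Bᵀ(A_cᵀ)^i Q_c A_c^{i+j−k} B + (if j = k then R else 0) ] = T_{j−k}. -/

import Mathlib

open Matrix Filter
open scoped Kronecker

/-- `A` is Schur-stable: every complex eigenvalue has modulus `< 1`. -/
def SchurStable {n : ℕ} (A : Matrix (Fin n) (Fin n) ℝ) : Prop :=
  ∀ μ ∈ spectrum ℂ (A.map Complex.ofReal), ‖μ‖ < 1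

/-- The `d`-th block of the infinite block-Toeplitz matrix associated with the
condensed Hessian. -/
noncomputable def Tblk {n m : ℕ} (Ac : Matrix (Fin n) (Fin n) ℝ)
    (B : Matrix (Fin n) (Fin m) ℝ) (Qc : Matrix (Fin n) (Fin n) ℝ)
    (R : Matrix (Fin m) (Fin m) ℝ) (d : ℤ) : Matrix (Fin m) (Fin m) ℝ :=
  if 0 ≤ d then
    (∑' i : ℕ, Bᵀ * (Acᵀ) ^ i * Qc * Ac ^ (i + d.toNat) * B) + (if d = 0 then R else 0)
  else
    ((∑' i : ℕ, Bᵀ * (Acᵀ) ^ i * Qc * Ac ^ (i + (-d).toNat) * B))ᵀ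

/-- The `(j,k)` block (for `j ≥ k`) of the condensed Hessian with horizon `N`. -/
noncomputable def Hge {n m : ℕ} (Ac : Matrix (Fin n) (Fin n) ℝ)
    (B : Matrix (Fin n) (Fin m) ℝ) (Qc P : Matrix (Fin n) (Fin n) ℝ)
    (R : Matrix (Fin m) (Fin m) ℝ) (N j k : ℕ) : Matrix (Fin m) (Fin m) ℝ :=
  (∑ i ∈ Finset.range (N - j), Bᵀ * (Acᵀ) ^ i * Qc * Ac ^ (i + j - k) * B)
    + Bᵀ * (Acᵀ) ^ (N - j) * P * Ac ^ (N - k) * B + (if j = k then R else 0)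

/-- The condensed Hessian with horizon `N`, as an `Nm × Nm` real matrix. -/
noncomputable def Hmat {n m : ℕ} (Ac : Matrix (Fin n) (Fin n) ℝ)
    (B : Matrix (Fin n) (Fin m) ℝ) (Qc P : Matrix (Fin n) (Fin n) ℝ)
    (R : Matrix (Fin m) (Fin m) ℝ) (N : ℕ) :
    Matrix (Fin N × Fin m) (Fin N × Fin m) ℝ :=
  Matrix.of fun p q =>
    if (q.1 : ℕ) ≤ (p.1 : ℕ) then Hge Ac B Qc P R N p.1 q.1 p.2 q.2
    else (Hge Ac B Qc P R N q.1 p.1)ᵀ p.2 q.2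

/-- The matrix symbol of the condensed Hessian. -/
noncomputable def symb {n m : ℕ} (Ac : Matrix (Fin n) (Fin n) ℝ)
    (B : Matrix (Fin n) (Fin m) ℝ) (Qc : Matrix (Fin n) (Fin n) ℝ)
    (R : Matrix (Fin m) (Fin m) ℝ) (z : ℂ) : Matrix (Fin m) (Fin m) ℂ :=
  (z • ((z • (1 : Matrix (Fin n) (Fin n) ℂ) - Ac.map Complex.ofReal)⁻¹
      * B.map Complex.ofReal))ᴴ
    * Qc.map Complex.ofReal
    * (z • ((z • (1 : Matrix (Fin n) (Fin n) ℂ) - Ac.map Complex.ofReal)⁻¹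
      * B.map Complex.ofReal))
  + R.map Complex.ofReal

/-! Gelfand's formula turns Schur stability of `A_c` into summability of `‖A_cⁱ‖`, and likewise
for `A_cᵀ`, which has the same spectrum. As `‖A_cⁱ‖ → 0`, the `i`-th term of the series defining
`T_d` is dominated by a multiple of `‖(A_cᵀ)ⁱ‖`, so the series converges and its truncations over
`range (N - j)` tend to `T_{j-k}`. -/

open scoped ENNReal

theorem summable_norm_pow_of_spectralRadius_lt_one {𝔸 : Type*} [NormedRing 𝔸]
    [NormedAlgebra ℂ 𝔸] [CompleteSpace 𝔸] {a : 𝔸} (ha : spectralRadius ℂ a < 1) :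
    Summable fun i : ℕ => ‖a ^ i‖ := by
  obtain ⟨r, hρr, hr1⟩ := ENNReal.lt_iff_exists_nnreal_btwn.mp ha
  have hroot :=
    (spectrum.pow_nnnorm_pow_one_div_tendsto_nhds_spectralRadius a).eventually_lt_const hρr
  refine Summable.of_norm_bounded_eventually_nat
    (summable_geometric_of_lt_one r.coe_nonneg (by exact_mod_cast hr1)) ?_
  filter_upwards [hroot, eventually_ge_atTop 1] with i hi hi1
  have : (‖a ^ i‖₊ : ℝ≥0∞) ≤ (r : ℝ≥0∞) ^ i := by
    have := pow_le_pow_left' hi.le i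
    rwa [← ENNReal.rpow_natCast, ← ENNReal.rpow_mul,
      one_div_mul_cancel (Nat.cast_ne_zero.mpr (by omega)), ENNReal.rpow_one] at this
  rw [norm_norm]
  exact_mod_cast this

attribute [local instance] Matrix.linftyOpNormedAddCommGroup Matrix.linftyOpNormedRing
  Matrix.linftyOpNormedAlgebra

theorem SchurStable.spectralRadius_lt_one {n : ℕ} {A : Matrix (Fin n) (Fin n) ℝ}
    (h : SchurStable A) : spectralRadius ℂ (A.map Complex.ofReal) < 1 := by
  rcases (spectrum ℂ (A.map Complex.ofReal)).eq_empty_or_nonempty with hempty | hne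
  · simp [spectralRadius, hempty]
  · have := spectrum.spectralRadius_lt_of_forall_lt_of_nonempty hne (r := 1)
      fun z hz => by simpa [← NNReal.coe_lt_coe] using h z hz
    simpa using this

theorem SchurStable.transpose {n : ℕ} {A : Matrix (Fin n) (Fin n) ℝ} (h : SchurStable A) :
    SchurStable Aᵀ := by
  intro z hz
  refine h z ?_
  have : algebraMap ℂ _ z - (A.map Complex.ofReal)ᵀ =
      (algebraMap ℂ _ z - A.map Complex.ofReal)ᵀ := by
    simp [transpose_sub, Algebra.algebraMap_eq_smul_one]
  rw [spectrum.mem_iff, transpose_map, this, isUnit_transpose] at hz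
  exact hz

theorem Matrix.linfty_opNorm_map_ofReal {m n : Type*} [Fintype m] [Fintype n]
    (M : Matrix m n ℝ) : ‖M.map Complex.ofReal‖ = ‖M‖ := by
  simp [linfty_opNorm_def]

theorem SchurStable.summable_norm_pow {n : ℕ} {A : Matrix (Fin n) (Fin n) ℝ}
    (h : SchurStable A) : Summable fun i : ℕ => ‖A ^ i‖ := by
  refine (summable_norm_pow_of_spectralRadius_lt_one h.spectralRadius_lt_one).congr fun i => ?_
  rw [← Matrix.linfty_opNorm_map_ofReal (A ^ i)]
  exact congrArg norm (A.map_pow Complex.ofRealHom i).symm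

theorem SchurStable.summable_Tblk_terms {n m : ℕ} {Ac : Matrix (Fin n) (Fin n) ℝ}
    (h : SchurStable Ac) (B : Matrix (Fin n) (Fin m) ℝ) (Qc : Matrix (Fin n) (Fin n) ℝ)
    (d : ℕ) : Summable fun i : ℕ => Bᵀ * (Acᵀ) ^ i * Qc * Ac ^ (i + d) * B := by
  have hpow_le_one : ∀ᶠ i in atTop, ‖Ac ^ i‖ ≤ 1 :=
    h.summable_norm_pow.tendsto_atTop_zero.eventually_le_const one_pos
  refine Summable.of_norm_bounded_eventually_nat
    (h.transpose.summable_norm_pow.mul_left (‖Bᵀ‖ * ‖Qc‖ * ‖Ac ^ d‖ * ‖B‖)) ?_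
  filter_upwards [hpow_le_one] with i hi
  calc ‖Bᵀ * (Acᵀ) ^ i * Qc * Ac ^ (i + d) * B‖
      ≤ ‖Bᵀ‖ * ‖(Acᵀ) ^ i‖ * ‖Qc‖ * (‖Ac ^ i‖ * ‖Ac ^ d‖) * ‖B‖ := by
        grw [pow_add, linfty_opNorm_mul, linfty_opNorm_mul, linfty_opNorm_mul,
          linfty_opNorm_mul, linfty_opNorm_mul (Ac ^ i)]
    _ ≤ ‖Bᵀ‖ * ‖(Acᵀ) ^ i‖ * ‖Qc‖ * (1 * ‖Ac ^ d‖) * ‖B‖ := by gcongr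
    _ = ‖Bᵀ‖ * ‖Qc‖ * ‖Ac ^ d‖ * ‖B‖ * ‖(Acᵀ) ^ i‖ := by ring

theorem Tblk_natCast {n m : ℕ} (Ac : Matrix (Fin n) (Fin n) ℝ) (B : Matrix (Fin n) (Fin m) ℝ)
    (Qc : Matrix (Fin n) (Fin n) ℝ) (R : Matrix (Fin m) (Fin m) ℝ) (d : ℕ) :
    Tblk Ac B Qc R d =
      (∑' i : ℕ, Bᵀ * (Acᵀ) ^ i * Qc * Ac ^ (i + d) * B) + (if d = 0 then R else 0) := by
  simp [Tblk]

theorem stmt4_general {n m : ℕ}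
    (A : Matrix (Fin n) (Fin n) ℝ) (B : Matrix (Fin n) (Fin m) ℝ)
    (K : Matrix (Fin m) (Fin n) ℝ)
    (Q : Matrix (Fin n) (Fin n) ℝ) (R : Matrix (Fin m) (Fin m) ℝ)
    (hstab : SchurStable (A - B * K))
    (j k : ℕ) (hjk : k ≤ j) :
    Filter.Tendsto
      (fun N : ℕ =>
        (∑ i ∈ Finset.range (N - j),
            Bᵀ * ((A - B * K)ᵀ) ^ i * (Q + Kᵀ * R * K) * (A - B * K) ^ (i + j - k) * B)
          + (if j = k then R else 0))
      atTop
      (nhds (Tblk (A - B * K) B (Q + Kᵀ * R * K) R ((j : ℤ) - (k : ℤ)))) := by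
  have hsum := hstab.summable_Tblk_terms B (Q + Kᵀ * R * K) (j - k)
  have hlim := (hsum.hasSum.tendsto_sum_nat.comp (tendsto_sub_atTop_nat j)).add_const
    (if j = k then R else 0)
  rw [← Nat.cast_sub hjk, Tblk_natCast]
  simpa only [Function.comp_def, Nat.add_sub_assoc hjk, Nat.sub_eq_zero_iff_le, hjk.ge_iff_eq']
    using hlim

/-- If `A - B*K` is Schur-stable and `j ≥ k ≥ 0`, the `(j,k)` block of the condensed
Hessian with terminal weight `P = Q` converges, as the horizon `N → ∞`, to the
Toeplitz block `T_{j-k}`. -/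
theorem stmt4 {n m : ℕ} (hn : 0 < n) (hm : 0 < m)
    (A : Matrix (Fin n) (Fin n) ℝ) (B : Matrix (Fin n) (Fin m) ℝ)
    (K : Matrix (Fin m) (Fin n) ℝ)
    (Q : Matrix (Fin n) (Fin n) ℝ) (R : Matrix (Fin m) (Fin m) ℝ)
    (hQ : Q.PosSemidef) (hR : R.PosDef)
    (hstab : SchurStable (A - B * K))
    (j k : ℕ) (hjk : k ≤ j) :
    Filter.Tendsto
      (fun N : ℕ =>
        (∑ i ∈ Finset.range (N - j),
            Bᵀ * ((A - B * K)ᵀ) ^ i * (Q + Kᵀ * R * K) * (A - B * K) ^ (i + j - k) * B)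
          + (if j = k then R else 0))
      atTop
      (nhds (Tblk (A - B * K) B (Q + Kᵀ * R * K) R ((j : ℤ) - (k : ℤ)))) :=
  stmt4_general A B K Q R hstab j k hjk
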